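/- arXiv:1411.6737 — 2 statements merged into one kernel-verified Lean document; each statement's English description precedes it below -/
import Mathlib

section
/- If H is a regular complex submanifold of a domain in ℂⁿ passing through z, and u is plurisubharmonic near z, then ν(u|_H, z) ≥ ν(u, z), i.e., the Lelong number can only increase under restriction to a submanifold. -/
open MeasureTheory Filter Metric Topology

noncomputable section

/-- `ℂⁿ` with its Euclidean structure. -/
abbrev Cn (n : ℕ) := EuclideanSpace ℂ (Fin n)

instance (n : ℕ) : MeasurableSpace (Cn n) := borel _
instance (n : ℕ) : BorelSpace (Cn n) := ⟨rfl⟩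
/-- Lebesgue measure on `ℂⁿ`, transported from the product measure. -/
instance (n : ℕ) : MeasureSpace (Cn n) :=
  ⟨Measure.map (WithLp.equiv 2 (Fin n → ℂ)).symm volume⟩

/-- The Lelong number of an `EReal`-valued function at a point:
`ν(u,x) = liminf_{z → x} u(z) / log ‖z - x‖`. -/
def lelong {F : Type*} [NormedAddCommGroup F] (u : F → EReal) (x : F) : EReal :=
  Filter.liminf (fun z => (((Real.log ‖z - x‖)⁻¹ : ℝ) : EReal) * u z) (𝓝[≠] x)

/-- Plurisubharmonicity on a set: upper semicontinuity, values `< +∞`, and the sub-mean-value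
inequality on every complex circle contained in the set (expressed via truncations from below,
so that the circle average is a genuine real integral; by monotone convergence this is
equivalent to the usual sub-mean-value inequality for the extended-real-valued integral). -/
def PshOn {F : Type*} [NormedAddCommGroup F] [NormedSpace ℂ F] (u : F → EReal) (Ω : Set F) : Prop :=
  UpperSemicontinuousOn u Ω ∧ (∀ z ∈ Ω, u z ≠ ⊤) ∧
  ∀ x ∈ Ω, ∀ v : F, ∀ r : ℝ, 0 < r →
    (∀ t : ℂ, ‖t‖ ≤ r → x + t • v ∈ Ω) →
    ∀ N : ℕ, u x ≤ (((2 * Real.pi)⁻¹ *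
      ∫ θ in (0:ℝ)..(2*Real.pi),
        ((u (x + ((r : ℂ) * Complex.exp (θ * Complex.I)) • v)) ⊔ ((-(N:ℝ) : ℝ) : EReal)).toReal : ℝ) : EReal)

/-- `e^{-2y}` for `y : EReal`, valued in `ℝ≥0∞`. -/
def eNeg2 (y : EReal) : ENNReal :=
  if y = ⊥ then ⊤ else ENNReal.ofReal (Real.exp ((-2) * y.toReal))

/-- `e^{-2u}` is integrable in some neighborhood of `x`. -/
def IntegrableENearAt {n : ℕ} (u : Cn n → EReal) (x : Cn n) : Prop :=
  ∃ U ∈ 𝓝 x, (∫⁻ z in U, eNeg2 (u z)) ≠ ⊤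

/-- The germ of `S` at `x₀` is the germ of a regular (smooth) complex hypersurface through `x₀`:
near `x₀`, `S` is the zero set of a holomorphic function with nonvanishing differential at `x₀`. -/
def IsSmoothHypersurfaceGermAt {n : ℕ} (S : Set (Cn n)) (x₀ : Cn n) : Prop :=
  ∃ V ∈ 𝓝 x₀, ∃ h : Cn n → ℂ, AnalyticOnNhd ℂ h V ∧ h x₀ = 0 ∧
    fderiv ℂ h x₀ ≠ 0 ∧ S ∩ V = {z ∈ V | h z = 0}

/-!
A map with injective differential at `0` is bi-Lipschitz near `0`, so
`log ‖φ w - z‖ = log ‖w‖ + O(1)` there. Since `u` is bounded above near `z`, passing from the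
weight `1 / log ‖φ w - z‖` to `1 / log ‖w‖` cannot lower the liminf, and the liminf defining
`ν(u, z)`, taken only along `φ w → z`, can only increase.
-/

namespace EReal

lemma coe_mul_le_coe_mul_of_nonpos {x : EReal} {a M : ℝ} (ha : a ≤ 0) (hx : x ≤ M) :
    ((a * M : ℝ) : EReal) ≤ (a : EReal) * x := by
  rw [EReal.coe_mul, mul_comm (a : EReal), mul_comm (a : EReal)]
  exact EReal.mul_le_mul_of_nonpos_right hx (EReal.coe_nonpos.2 ha)

lemma coe_mul_le_inv_mul_of_lt_inv_mul {x : EReal} {A B s t : ℝ} (hA : A < 0) (hB : B < 0)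
    (hBA : B ≤ s * A) (ht : 0 ≤ t) (htx : (t : EReal) < ((B⁻¹ : ℝ) : EReal) * x) :
    ((s * t : ℝ) : EReal) ≤ ((A⁻¹ : ℝ) : EReal) * x := by
  have hx : x ≤ ((s * t * A : ℝ) : EReal) :=
    calc x = ((B⁻¹ : ℝ) : EReal) * x * (B : EReal) := by
          rw [mul_comm, ← mul_assoc, ← EReal.coe_mul, mul_inv_cancel₀ hB.ne, EReal.coe_one, one_mul]
      _ ≤ (t : EReal) * (B : EReal) :=
          EReal.mul_le_mul_of_nonpos_right htx.le (EReal.coe_nonpos.2 hB.le)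
      _ ≤ ((s * t * A : ℝ) : EReal) := by
          rw [← EReal.coe_mul, EReal.coe_le_coe_iff]
          nlinarith
  calc ((s * t : ℝ) : EReal) = ((s * t * A : ℝ) : EReal) * ((A⁻¹ : ℝ) : EReal) := by
        rw [← EReal.coe_mul, mul_assoc, mul_inv_cancel₀ hA.ne, mul_one]
    _ ≤ x * ((A⁻¹ : ℝ) : EReal) :=
        EReal.mul_le_mul_of_nonpos_right hx (EReal.coe_nonpos.2 (inv_nonpos.2 hA.le))
    _ = ((A⁻¹ : ℝ) : EReal) * x := mul_comm _ _

end EReal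

/-- For levels `q ≥ 0` below the left side, `g / a = (b / a) (g / b)` with
`b / a ≥ 1 + C / a → 1`; for levels `q < 0`, `g / a ≥ M / a → 0`. -/
theorem liminf_inv_mul_le_liminf_inv_mul {α : Type*} {l : Filter α} {a b : α → ℝ}
    {g : α → EReal} {C M : ℝ} (ha : Tendsto a l atBot) (hba : ∀ᶠ x in l, b x ≤ C + a x)
    (hg : ∀ᶠ x in l, g x ≤ M) :
    liminf (fun x => (((b x)⁻¹ : ℝ) : EReal) * g x) l ≤
      liminf (fun x => (((a x)⁻¹ : ℝ) : EReal) * g x) l := by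
  refine EReal.ge_of_forall_gt_iff_ge.1 fun q hq => le_liminf_of_le (by isBoundedDefault) ?_
  have ha_neg : ∀ᶠ x in l, a x < 0 := ha.eventually_lt_atBot 0
  rcases lt_or_ge q 0 with hq0 | hq0
  · have hlim : Tendsto (fun x => (a x)⁻¹ * M) l (𝓝 0) := by
      simpa using (tendsto_inv_atBot_zero.comp ha).mul_const M
    filter_upwards [hlim.eventually_const_lt hq0, hg, ha_neg] with x hqx hgx hax
    exact (EReal.coe_le_coe_iff.2 hqx.le).trans
      (EReal.coe_mul_le_coe_mul_of_nonpos (inv_nonpos.2 hax.le) hgx)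
  · obtain ⟨t, hqt, htL⟩ := EReal.exists_between_coe_real hq
    replace hqt : q < t := EReal.coe_lt_coe_iff.1 hqt
    have ht : 0 < t := hq0.trans_lt hqt
    set s := q / t
    have hs : s - 1 < 0 := by rw [sub_neg, div_lt_one ht]; exact hqt
    have hb : Tendsto b l atBot :=
      tendsto_atBot_mono' l hba (tendsto_atBot_add_const_left l C ha)
    filter_upwards [eventually_lt_of_lt_liminf htL, ha_neg, hb.eventually_lt_atBot 0, hba,
      ha.eventually_le_atBot (C / (s - 1))] with x htx hax hbx hbax haC
    have hbsa : b x ≤ s * a x := by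
      have := (le_div_iff_of_neg hs).1 haC
      linarith
    have hst : s * t = q := div_mul_cancel₀ q ht.ne'
    simpa only [hst] using EReal.coe_mul_le_inv_mul_of_lt_inv_mul hax hbx hbsa ht.le htx

theorem tendsto_log_norm_sub_nhdsNE_atBot {E : Type*} [NormedAddCommGroup E] (x : E) :
    Tendsto (fun w => Real.log ‖w - x‖) (𝓝[≠] x) atBot :=
  Real.tendsto_log_nhdsGT_zero.comp (tendsto_norm_sub_self_nhdsNE x)

section Lelong

variable {E F : Type*} [NormedAddCommGroup E] [NormedAddCommGroup F]

theorem lelong_le_liminf_comp {X : Type*} [TopologicalSpace X] (u : F → EReal) {f : X → F} {x : X}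
    (hf : Tendsto f (𝓝[≠] x) (𝓝[≠] (f x))) :
    lelong u (f x) ≤
      liminf (fun w => (((Real.log ‖f w - f x‖)⁻¹ : ℝ) : EReal) * u (f w)) (𝓝[≠] x) :=
  hf.liminf_le_liminf_comp

theorem lelong_le_lelong_comp_of_isBigO {u : F → EReal} {f : E → F} {x : E} {M : ℝ}
    (hf : Tendsto f (𝓝[≠] x) (𝓝[≠] (f x))) (hO : (f · - f x) =O[𝓝 x] (· - x))
    (hu : ∀ᶠ y in 𝓝 (f x), u y ≤ M) :
    lelong u (f x) ≤ lelong (fun w => u (f w)) x := by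
  obtain ⟨c, hc, hbound⟩ := hO.exists_pos
  have hlog : ∀ᶠ w in 𝓝[≠] x,
      Real.log ‖f w - f x‖ ≤ Real.log c + Real.log ‖w - x‖ := by
    filter_upwards [nhdsWithin_le_nhds hbound.bound, hf self_mem_nhdsWithin,
      self_mem_nhdsWithin] with w hw hfw hwx
    have hfw : 0 < ‖f w - f x‖ := norm_pos_iff.2 (sub_ne_zero.2 hfw)
    have hwx : ‖w - x‖ ≠ 0 := norm_ne_zero_iff.2 (sub_ne_zero.2 hwx)
    rw [← Real.log_mul hc.ne' hwx]
    exact Real.log_le_log hfw hw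
  exact (lelong_le_liminf_comp u hf).trans <|
    liminf_inv_mul_le_liminf_inv_mul (tendsto_log_norm_sub_nhdsNE_atBot x) hlog
      ((hf.mono_right nhdsWithin_le_nhds).eventually hu)

theorem HasFDerivAt.lelong_le_lelong_comp {𝕜 : Type*} [NontriviallyNormedField 𝕜]
    [CompleteSpace 𝕜] [NormedSpace 𝕜 E] [NormedSpace 𝕜 F] [FiniteDimensional 𝕜 E]
    {u : F → EReal} {f : E → F} {f' : E →L[𝕜] F} {x : E} {M : ℝ} (hf : HasFDerivAt f f' x)
    (hf' : Function.Injective f') (hu : ∀ᶠ y in 𝓝 (f x), u y ≤ M) :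
    lelong u (f x) ≤ lelong (fun w => u (f w)) x := by
  obtain ⟨K, -, hK⟩ := f'.injective_iff_antilipschitz.1 hf'
  exact lelong_le_lelong_comp_of_isBigO (hf.tendsto_nhdsNE ⟨K, hK⟩) hf.isBigO_sub hu

end Lelong

theorem UpperSemicontinuousWithinAt.exists_eventually_le_coe {X : Type*} [TopologicalSpace X]
    {u : X → EReal} {s : Set X} {z : X} (hu : UpperSemicontinuousWithinAt u s z)
    (hz : u z ≠ ⊤) : ∃ M : ℝ, ∀ᶠ y in 𝓝[s] z, u y ≤ M := by
  obtain ⟨M, hM, -⟩ := EReal.exists_between_coe_real (lt_top_iff_ne_top.2 hz)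
  exact ⟨M, (hu M hM).mono fun _ h => h.le⟩

/-- **Lelong numbers increase under restriction.** If `u` is plurisubharmonic near `z` and
`φ` is a holomorphic parametrization of a regular complex submanifold `H` through `z = φ 0`
(with injective differential at `0`), then `ν(u|_H, z) = ν(u ∘ φ, 0) ≥ ν(u, z)`. -/
theorem lelong_le_restrict {n : ℕ} (U : Set (Cn n)) (hU : IsOpen U)
    (u : Cn n → EReal) (hu : PshOn u U) (z : Cn n) (hz : z ∈ U) :
    ∀ (d : ℕ) (φ : Cn d → Cn n) (W : Set (Cn d)), W ∈ 𝓝 (0 : Cn d) →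
      AnalyticOnNhd ℂ φ W → φ 0 = z → Function.Injective (fderiv ℂ φ 0) →
      lelong u z ≤ lelong (fun w => u (φ w)) 0 := by
  intro d φ W hW hφ hφ0 hinj
  subst hφ0
  obtain ⟨M, hM⟩ := UpperSemicontinuousWithinAt.exists_eventually_le_coe (hu.1 _ hz) (hu.2.1 _ hz)
  rw [hU.nhdsWithin_eq hz] at hM
  exact (hφ 0 (mem_of_mem_nhds hW)).differentiableAt.hasFDerivAt.lelong_le_lelong_comp hinj hM
end
end

section
/- Let f be a holomorphic function on the unit disc Δ ⊂ ℂ with f(0) = 0 and f(a) = 1 for some a ∈ Δ with |a| < 1/6. Then ∫_Δ |f|² dλ > C₁ |a|^{-2}, where C₁ > 0 is an absolute constant independent of a and f, and λ denotes the Lebesgue area measure. -/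
open MeasureTheory Filter Metric Topology

noncomputable section

open Real Set

/-!
By the Cauchy integral formula, `f a - f 0` is the average over the circle `|z| = r` of
`a / (z - a) • f z`, so for `1/2 < r < 1` the mean of `|f|` on that circle is at least
`(r - |a|) / |a| ≥ 1 / (3 |a|)`. By Cauchy–Schwarz the mean of `|f|²` is then at least
`1 / (9 |a|²)`, and integrating in polar coordinates over the annulus `1/2 < |z| < 1` gives
`∫_Δ |f|² ≥ π / (12 |a|²)`.
-/

theorem norm_circleAverage_le {E : Type*} [NormedAddCommGroup E] [NormedSpace ℝ E]
    (f : ℂ → E) (c : ℂ) (R : ℝ) :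
    ‖circleAverage f c R‖ ≤ circleAverage (‖f ·‖) c R := by
  rw [circleAverage_def, circleAverage_def, norm_smul, Real.norm_of_nonneg (by positivity),
    smul_eq_mul]
  gcongr
  exact intervalIntegral.norm_integral_le_integral_norm two_pi_pos.le

theorem sq_circleAverage_le {φ : ℂ → ℝ} {c : ℂ} {R : ℝ} (hφ : ContinuousOn φ (sphere c |R|)) :
    circleAverage φ c R ^ 2 ≤ circleAverage (φ · ^ 2) c R := by
  have hi : CircleIntegrable φ c R := hφ.circleIntegrable'
  have hi2 : CircleIntegrable (φ · ^ 2) c R := (hφ.pow 2).circleIntegrable'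
  set m := circleAverage φ c R
  have hvar : 0 ≤ circleAverage (fun z ↦ (φ z - m) ^ 2) c R :=
    circleAverage_nonneg_of_nonneg fun z _ ↦ sq_nonneg _
  have hexp : (fun z ↦ (φ z - m) ^ 2) = ((φ · ^ 2) + (-2 * m) • φ) + fun _ ↦ m ^ 2 := by
    funext z; simp only [Pi.add_apply, Pi.smul_apply, smul_eq_mul]; ring
  rw [hexp, circleAverage_add (hi2.add (hi.const_smul (a := -2 * m)))
      (circleIntegrable_const _ _ _), circleAverage_add hi2 (hi.const_smul (a := -2 * m)),
    circleAverage_smul, circleAverage_const, smul_eq_mul] at hvar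
  nlinarith

variable {E : Type*} [NormedAddCommGroup E] [NormedSpace ℂ E] [CompleteSpace E]

theorem DiffContOnCl.sub_eq_circleAverage {f : ℂ → E} {c w : ℂ} {R : ℝ}
    (hf : DiffContOnCl ℂ f (ball c R)) (hw : w ∈ ball c R) :
    f w - f c = Real.circleAverage (fun z ↦ ((w - c) / (z - w)) • f z) c R := by
  have hR : |R| = R := abs_of_pos (pos_of_mem_ball hw)
  rw [← hR] at hf hw
  have hfs : ContinuousOn f (sphere c |R|) := hf.continuousOn_ball.mono sphere_subset_closedBall
  have hzw : ∀ z ∈ sphere c |R|, z - w ≠ 0 := fun z hz ↦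
    sub_ne_zero.2 fun h ↦ (mem_ball.1 hw).ne (h ▸ mem_sphere.1 hz)
  have hkernel : ContinuousOn (fun z ↦ (z - c) / (z - w)) (sphere c |R|) :=
    (continuousOn_id.sub continuousOn_const).div (continuousOn_id.sub continuousOn_const) hzw
  rw [← hf.circleAverage_smul_div hw, ← hf.circleAverage,
    ← circleAverage_sub (f₁ := fun z ↦ ((z - c) / (z - w)) • f z)
      (hkernel.smul hfs).circleIntegrable' hfs.circleIntegrable']
  refine circleAverage_congr_sphere fun z hz ↦ ?_
  have hquot : (w - c) / (z - w) = (z - c) / (z - w) - 1 := by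
    field_simp [hzw z hz]; ring
  rw [Pi.sub_apply, hquot, sub_smul, one_smul]

theorem DiffContOnCl.norm_sub_le_circleAverage {f : ℂ → E} {c w : ℂ} {R : ℝ}
    (hf : DiffContOnCl ℂ f (ball c R)) (hw : w ∈ ball c R) :
    ‖f w - f c‖ ≤ dist w c / (R - dist w c) * Real.circleAverage (‖f ·‖) c R := by
  have hR : |R| = R := abs_of_pos (pos_of_mem_ball hw)
  have hwc : dist w c < R := mem_ball.1 hw
  have hfs : ContinuousOn f (sphere c |R|) := by
    rw [hR]; exact hf.continuousOn_ball.mono sphere_subset_closedBall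
  have hzw : ∀ z ∈ sphere c |R|, R - dist w c ≤ ‖z - w‖ := fun z hz ↦ by
    rw [← dist_eq_norm, ← hR, ← mem_sphere.1 hz]
    linarith [dist_triangle z w c]
  rw [hf.sub_eq_circleAverage hw, ← smul_eq_mul, ← circleAverage_fun_smul]
  refine (norm_circleAverage_le _ c R).trans (circleAverage_mono ?_ ?_ fun z hz ↦ ?_)
  · refine (ContinuousOn.smul ?_ hfs).norm.circleIntegrable'
    exact continuousOn_const.div (continuousOn_id.sub continuousOn_const) fun z hz ↦
      norm_pos_iff.1 ((sub_pos.2 hwc).trans_le (hzw z hz))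
  · exact (hfs.norm.const_smul (dist w c / (R - dist w c))).circleIntegrable'
  · rw [norm_smul, norm_div, ← dist_eq_norm, smul_eq_mul]
    gcongr
    exact hzw z hz

theorem DiffContOnCl.sq_norm_sub_le_circleAverage {f : ℂ → E} {c w : ℂ} {R : ℝ}
    (hf : DiffContOnCl ℂ f (ball c R)) (hw : w ∈ ball c R) :
    ‖f w - f c‖ ^ 2 ≤
      (dist w c / (R - dist w c)) ^ 2 * Real.circleAverage (‖f ·‖ ^ 2) c R := by
  have hfs : ContinuousOn f (sphere c |R|) := by
    rw [abs_of_pos (pos_of_mem_ball hw)]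
    exact hf.continuousOn_ball.mono sphere_subset_closedBall
  calc ‖f w - f c‖ ^ 2
      ≤ (dist w c / (R - dist w c) * Real.circleAverage (‖f ·‖) c R) ^ 2 := by
        gcongr
        exact hf.norm_sub_le_circleAverage hw
    _ ≤ (dist w c / (R - dist w c)) ^ 2 * Real.circleAverage (‖f ·‖ ^ 2) c R := by
        rw [mul_pow]
        gcongr
        exact sq_circleAverage_le hfs.norm

theorem Complex.polarCoord_symm_eq_circleMap (p : ℝ × ℝ) :
    Complex.polarCoord.symm p = circleMap 0 p.1 p.2 := by
  simp [circleMap, Complex.exp_mul_I, ← Complex.ofReal_cos, ← Complex.ofReal_sin]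

theorem lintegral_circleMap_le_lintegral_ball {g : ℂ → ENNReal} {R : ℝ}
    (hg : ContinuousOn g (ball 0 R)) :
    ∫⁻ r in Ioo 0 R, ∫⁻ θ in Ioo (-π) π, ENNReal.ofReal r * g (circleMap 0 r θ) ≤
      ∫⁻ z in ball 0 R, g z := by
  set S := Ioo 0 R ×ˢ Ioo (-π) π
  have hS : MeasurableSet S := measurableSet_Ioo.prod measurableSet_Ioo
  have hmaps : MapsTo (fun p : ℝ × ℝ ↦ circleMap 0 p.1 p.2) S (ball 0 R) := by
    rintro ⟨r, θ⟩ ⟨hr, -⟩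
    simpa [abs_of_pos hr.1] using hr.2
  have hmeas : AEMeasurable (fun p : ℝ × ℝ ↦ ENNReal.ofReal p.1 * g (circleMap 0 p.1 p.2))
      (volume.restrict S) :=
    measurable_fst.ennreal_ofReal.aemeasurable.mul
      ((hg.comp (by fun_prop) hmaps).aemeasurable hS)
  calc ∫⁻ r in Ioo 0 R, ∫⁻ θ in Ioo (-π) π, ENNReal.ofReal r * g (circleMap 0 r θ)
      = ∫⁻ p in S, ENNReal.ofReal p.1 * g (circleMap 0 p.1 p.2) := by
        rw [Measure.volume_eq_prod, ← Measure.prod_restrict] at hmeas ⊢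
        exact (lintegral_prod _ hmeas).symm
    _ = ∫⁻ p in S, ENNReal.ofReal p.1 • (ball 0 R).indicator g (Complex.polarCoord.symm p) := by
        refine setLIntegral_congr_fun hS fun p hp ↦ ?_
        rw [Complex.polarCoord_symm_eq_circleMap, indicator_of_mem (hmaps hp), smul_eq_mul]
    _ ≤ ∫⁻ p in polarCoord.target,
          ENNReal.ofReal p.1 • (ball 0 R).indicator g (Complex.polarCoord.symm p) := by
        refine lintegral_mono_set fun p hp ↦ ?_
        rw [polarCoord_target]
        exact ⟨hp.1.1, hp.2⟩
    _ = ∫⁻ z in ball 0 R, g z := by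
        rw [Complex.lintegral_comp_polarCoord_symm, lintegral_indicator measurableSet_ball]

theorem setLIntegral_Ioo_circleMap_eq_circleAverage {φ : ℂ → ℝ} {c : ℂ} {R : ℝ}
    (hφ : ContinuousOn φ (sphere c |R|)) (hφ0 : ∀ z ∈ sphere c |R|, 0 ≤ φ z) :
    ∫⁻ θ in Ioo (-π) π, ENNReal.ofReal (φ (circleMap c R θ)) =
      ENNReal.ofReal (2 * π * circleAverage φ c R) := by
  have hcont : Continuous fun θ ↦ φ (circleMap c R θ) :=
    hφ.comp_continuous (continuous_circleMap c R) (circleMap_mem_sphere' c R)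
  have hperiod : (fun θ ↦ φ (circleMap c R θ)).Periodic (2 * π) :=
    (periodic_circleMap c R).comp φ
  have hshift := hperiod.intervalIntegral_add_eq (-π) 0
  rw [show -π + 2 * π = π by ring, zero_add] at hshift
  rw [circleAverage_def, smul_eq_mul, ← mul_assoc, mul_inv_cancel₀ two_pi_pos.ne', one_mul,
    ← hshift, intervalIntegral.integral_of_le (by linarith [pi_pos]),
    integral_Ioc_eq_integral_Ioo, ofReal_integral_eq_lintegral_ofReal
      (hcont.integrableOn_Icc.mono_set Ioo_subset_Icc_self)
      (ae_of_all _ fun θ ↦ hφ0 _ (circleMap_mem_sphere' c R θ))]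

theorem ofReal_le_lintegral_ball_of_le_circleAverage {φ : ℂ → ℝ} {R s c : ℝ}
    (hφ : ContinuousOn φ (ball 0 R)) (hφ0 : ∀ z ∈ ball 0 R, 0 ≤ φ z) (hs : 0 ≤ s) (hsR : s ≤ R)
    (hc : ∀ r ∈ Ioo s R, c ≤ circleAverage φ 0 r) :
    ENNReal.ofReal (π * (R ^ 2 - s ^ 2) * c) ≤ ∫⁻ z in ball 0 R, ENNReal.ofReal (φ z) := by
  have hradial : ∫⁻ r in Ioo s R, ENNReal.ofReal r = ENNReal.ofReal ((R ^ 2 - s ^ 2) / 2) := by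
    rw [← integral_id, intervalIntegral.integral_of_le hsR, integral_Ioc_eq_integral_Ioo]
    exact (ofReal_integral_eq_lintegral_ofReal (continuous_id.integrableOn_Icc.mono_set
      Ioo_subset_Icc_self) ((ae_restrict_iff' measurableSet_Ioo).2
        (ae_of_all _ fun r hr ↦ hs.trans hr.1.le))).symm
  have hcircle : ∀ r ∈ Ioo s R, ENNReal.ofReal r * ENNReal.ofReal (2 * π * c) ≤
      ∫⁻ θ in Ioo (-π) π, ENNReal.ofReal r * ENNReal.ofReal (φ (circleMap 0 r θ)) := by
    intro r hr
    have hsphere : sphere (0 : ℂ) |r| ⊆ ball 0 R := by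
      rw [abs_of_pos (hs.trans_lt hr.1)]; exact sphere_subset_ball hr.2
    rw [lintegral_const_mul' _ _ ENNReal.ofReal_ne_top, setLIntegral_Ioo_circleMap_eq_circleAverage
      (hφ.mono hsphere) fun z hz ↦ hφ0 z (hsphere hz)]
    gcongr
    exact hc r hr
  calc ENNReal.ofReal (π * (R ^ 2 - s ^ 2) * c)
      = (∫⁻ r in Ioo s R, ENNReal.ofReal r) * ENNReal.ofReal (2 * π * c) := by
        rw [hradial, ← ENNReal.ofReal_mul (by nlinarith)]
        congr 1
        ring
    _ ≤ ∫⁻ r in Ioo s R, ∫⁻ θ in Ioo (-π) π,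
          ENNReal.ofReal r * ENNReal.ofReal (φ (circleMap 0 r θ)) := by
        rw [← lintegral_mul_const _ (by fun_prop)]
        exact setLIntegral_mono' measurableSet_Ioo hcircle
    _ ≤ ∫⁻ r in Ioo 0 R, ∫⁻ θ in Ioo (-π) π,
          ENNReal.ofReal r * ENNReal.ofReal (φ (circleMap 0 r θ)) :=
        lintegral_mono_set (Ioo_subset_Ioo_left hs)
    _ ≤ ∫⁻ z in ball 0 R, ENNReal.ofReal (φ z) :=
        lintegral_circleMap_le_lintegral_ball (ENNReal.continuous_ofReal.comp_continuousOn hφ)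

/-- **A lower bound for `L²` norms on the disc.** There is an absolute constant `C₁ > 0` such
that every holomorphic function `f` on the unit disc with `f 0 = 0` and `f a = 1` for some
`|a| < 1/6` satisfies `∫_Δ |f|² > C₁ |a|⁻²`. -/
theorem l2_lower_bound_disc :
    ∃ C₁ : ℝ, 0 < C₁ ∧ ∀ (f : ℂ → ℂ) (a : ℂ),
      DifferentiableOn ℂ f (ball (0 : ℂ) 1) → f 0 = 0 → f a = 1 → ‖a‖ < 1/6 →
      ENNReal.ofReal (C₁ / ‖a‖ ^ 2) <
        ∫⁻ z in ball (0 : ℂ) 1, (‖f z‖₊ : ENNReal) ^ 2 := by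
  refine ⟨1 / 4, by norm_num, fun f a hf h0 ha haa ↦ ?_⟩
  have ha0 : 0 < ‖a‖ := norm_pos_iff.2 fun h ↦ by simp [h, h0] at ha
  have hcircle : ∀ r ∈ Ioo (1 / 2) 1, 1 / (9 * ‖a‖ ^ 2) ≤ circleAverage (‖f ·‖ ^ 2) 0 r := by
    rintro r ⟨hr₁, hr₂⟩
    have hfr : DiffContOnCl ℂ f (ball 0 r) := hf.diffContOnCl_ball (closedBall_subset_ball hr₂)
    have hbound := hfr.sq_norm_sub_le_circleAverage (w := a) (mem_ball_zero_iff.2 (by linarith))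
    rw [ha, h0, sub_zero, norm_one, one_pow, dist_zero_right] at hbound
    have hq : ‖a‖ / (r - ‖a‖) ≤ 3 * ‖a‖ := by
      rw [div_le_iff₀ (by linarith)]; nlinarith
    rw [div_le_iff₀ (by positivity : (0 : ℝ) < 9 * ‖a‖ ^ 2)]
    nlinarith [pow_le_pow_left₀ (div_nonneg ha0.le (by linarith)) hq 2,
      circleAverage_nonneg_of_nonneg (c := 0) (R := r) fun z _ ↦ sq_nonneg ‖f z‖]
  calc ENNReal.ofReal (1 / 4 / ‖a‖ ^ 2)
      < ENNReal.ofReal (π * (1 ^ 2 - (1 / 2) ^ 2) * (1 / (9 * ‖a‖ ^ 2))) := by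
        rw [ENNReal.ofReal_lt_ofReal_iff (by positivity)]
        field_simp
        linarith [pi_gt_three]
    _ ≤ ∫⁻ z in ball (0 : ℂ) 1, ENNReal.ofReal (‖f z‖ ^ 2) :=
        ofReal_le_lintegral_ball_of_le_circleAverage (hf.continuousOn.norm.pow 2)
          (fun _ _ ↦ by positivity) (by norm_num) (by norm_num) hcircle
    _ = ∫⁻ z in ball (0 : ℂ) 1, (‖f z‖₊ : ENNReal) ^ 2 := by
        simp only [ENNReal.ofReal_pow (norm_nonneg _), ofReal_norm, enorm_eq_nnnorm]
end
end
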